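/- Let p be a prime and let d, z be integers with z² ≡ d (mod p). Then p^n divides N_n(d,z)² - d·D_n(d,z)² for all n ≥ 1. -/

import Mathlib

/-- Rédei polynomial `N_n(d,z)` over the integers. -/
def redeiN (d z : ℤ) (n : ℕ) : ℤ :=
  ∑ i ∈ Finset.range (n / 2 + 1), (n.choose (2 * i) : ℤ) * d ^ i * z ^ (n - 2 * i)

/-- Rédei polynomial `D_n(d,z)` over the integers. -/
def redeiD (d z : ℤ) (n : ℕ) : ℤ :=
  ∑ i ∈ Finset.range (n / 2 + 1), (n.choose (2 * i + 1) : ℤ) * d ^ i * z ^ (n - 2 * i - 1)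

/-! Expanding `(z + √d)ⁿ` binomially and separating even and odd powers of `√d` gives
`(z + √d)ⁿ = N_n + D_n √d`. Taking norms in `ℤ[√d]`, which are multiplicative, yields
`N_n² - d D_n² = (z² - d)ⁿ`, and `p ∣ z² - d`. -/

open Finset

theorem Finset.sum_range_two_mul {M : Type*} [AddCommMonoid M] (f : ℕ → M) (m : ℕ) :
    ∑ k ∈ range (2 * m), f k = ∑ i ∈ range m, (f (2 * i) + f (2 * i + 1)) := by
  induction m with
  | zero => simp
  | succ m ih => rw [Nat.mul_succ, sum_range_succ, sum_range_succ, ih, sum_range_succ, add_assoc]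

theorem intCast_add_pow_eq_redeiN_add_redeiD_mul {R : Type*} [CommRing R] {d : ℤ} {s : R}
    (hs : s ^ 2 = d) (z : ℤ) (n : ℕ) :
    ((z : R) + s) ^ n = redeiN d z n + redeiD d z n * s := by
  have hn : n + 1 ≤ 2 * (n / 2 + 1) := by omega
  rw [add_comm, add_pow, sum_subset (range_subset_range.2 hn) fun k _ hk => by
    rw [Nat.choose_eq_zero_of_lt (by simpa using hk), Nat.cast_zero, mul_zero],
    sum_range_two_mul, sum_add_distrib, redeiN, redeiD]
  push_cast
  rw [sum_mul]
  congr 1 <;> refine sum_congr rfl fun i _ => ?_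
  · rw [pow_mul, hs]; ring
  · rw [pow_succ, pow_mul, hs, Nat.sub_sub]; ring

theorem Zsqrtd.norm_pow {d : ℤ} (x : ℤ√d) (n : ℕ) : (x ^ n).norm = x.norm ^ n :=
  map_pow Zsqrtd.normMonoidHom x n

theorem redeiN_sq_sub_mul_redeiD_sq (d z : ℤ) (n : ℕ) :
    redeiN d z n ^ 2 - d * redeiD d z n ^ 2 = (z ^ 2 - d) ^ n := by
  have hs : (Zsqrtd.sqrtd : ℤ√d) ^ 2 = d := by rw [sq, Zsqrtd.dmuld]
  have h := congrArg Zsqrtd.norm (intCast_add_pow_eq_redeiN_add_redeiD_mul hs z n)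
  rw [Zsqrtd.norm_pow] at h
  simp [Zsqrtd.norm_def] at h
  linear_combination -h

theorem redei_padic_divisibility_general (p : ℕ) (d z : ℤ)
    (hz : z ^ 2 ≡ d [ZMOD (p : ℤ)]) :
    ∀ n : ℕ, 1 ≤ n → ((p : ℤ) ^ n) ∣ (redeiN d z n ^ 2 - d * redeiD d z n ^ 2) := by
  intro n _
  rw [redeiN_sq_sub_mul_redeiD_sq]
  exact pow_dvd_pow_of_dvd hz.symm.dvd n

theorem redei_padic_divisibility (p : ℕ) (hp : p.Prime) (d z : ℤ)
    (hz : z ^ 2 ≡ d [ZMOD (p : ℤ)]) :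
    ∀ n : ℕ, 1 ≤ n → ((p : ℤ) ^ n) ∣ (redeiN d z n ^ 2 - d * redeiD d z n ^ 2) :=
  redei_padic_divisibility_general p d z hz
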